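/- Let Ω1 and Ω2 be finite multisets of solution mappings such that Ω1 is domain-uniform (all mappings in Ω1 have the same domain). Then the simple difference satisfies the double-complement axiom Ω1 \ (Ω1 \ (Ω1 \ Ω2)) = Ω1 \ Ω2, as an equality of multisets. -/
import Mathlib


open scoped Classical

noncomputable section

/-- A solution mapping: a finite partial function from variables to terms. -/
abbrev SMap (V T : Type) := Finmap (fun _ : V => T)

variable {V T : Type} [DecidableEq V] [DecidableEq T]

/-- Two solution mappings are compatible if they agree on the
intersection of their domains. -/
def Compat (μ1 μ2 : SMap V T) : Prop :=
  ∀ x ∈ μ1, x ∈ μ2 → μ1.lookup x = μ2.lookup x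

/-- Join of two multisets of solution mappings: unions of compatible pairs,
multiplicities multiply and add over all decompositions. -/
def mjoin (Ω1 Ω2 : Multiset (SMap V T)) : Multiset (SMap V T) :=
  Ω1.bind fun μ1 => (Ω2.filter fun μ2 => Compat μ1 μ2).map fun μ2 => μ1 ∪ μ2

/-- Simple difference: keep (with multiplicity) the mappings of `Ω1`
incompatible with every element of `Ω2`. -/
def msdiff (Ω1 Ω2 : Multiset (SMap V T)) : Multiset (SMap V T) :=
  Ω1.filter fun μ1 => ∀ μ2 ∈ Ω2, ¬ Compat μ1 μ2

/-- SPARQL minus: keep (with multiplicity) the mappings of `Ω1` such that every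
element of `Ω2` is incompatible with it or has disjoint domain. -/
def sminus (Ω1 Ω2 : Multiset (SMap V T)) : Multiset (SMap V T) :=
  Ω1.filter fun μ1 => ∀ μ2 ∈ Ω2, ¬ Compat μ1 μ2 ∨ μ1.keys ∩ μ2.keys = ∅

/-- Domain of a multiset of mappings: the union of the domains of its elements. -/
def mdom (Ω : Multiset (SMap V T)) : Finset V := (Ω.map Finmap.keys).sup

/-- A multiset of mappings is domain-uniform when all its elements have the
same domain. -/
def DomUniform (Ω : Multiset (SMap V T)) : Prop :=
  ∀ μ1 ∈ Ω, ∀ μ2 ∈ Ω, Finmap.keys μ1 = Finmap.keys μ2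

/-- Three truth values: true, false, error. -/
inductive TV where | t | f | e
deriving DecidableEq

/-- Strong Kleene conjunction. -/
def TV.andTV : TV → TV → TV
  | .t, q => q
  | .f, _ => .f
  | .e, .t => .e
  | .e, .f => .f
  | .e, .e => .e

/-- Strong Kleene disjunction. -/
def TV.orTV : TV → TV → TV
  | .t, _ => .t
  | .f, q => q
  | .e, .t => .t
  | .e, .f => .e
  | .e, .e => .e

/-- Three-valued negation. -/
def TV.notTV : TV → TV
  | .t => .f
  | .f => .t
  | .e => .e

/-- Selection formulas, built from atoms `x = c`, `x = y` and `bound x`. -/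
inductive SForm (V T : Type) where
  | eqc : V → T → SForm V T
  | eqv : V → V → SForm V T
  | bound : V → SForm V T
  | fand : SForm V T → SForm V T → SForm V T
  | for' : SForm V T → SForm V T → SForm V T
  | fnot : SForm V T → SForm V T

/-- Three-valued evaluation of a selection formula on a solution mapping. -/
def evalF (μ : SMap V T) : SForm V T → TV
  | .eqc x c =>
    match μ.lookup x with
    | some a => if a = c then .t else .f
    | none => .e
  | .eqv x y =>
    match μ.lookup x, μ.lookup y with
    | some a, some b => if a = b then .t else .f
    | some _, none => .e
    | none, _ => .e
  | .bound x => if x ∈ μ then .t else .f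
  | .fand F1 F2 => (evalF μ F1).andTV (evalF μ F2)
  | .for' F1 F2 => (evalF μ F1).orTV (evalF μ F2)
  | .fnot F1 => (evalF μ F1).notTV

/-- Selection: keep (with multiplicity) the mappings evaluating `F` to true. -/
def sel (F : SForm V T) (Ω : Multiset (SMap V T)) : Multiset (SMap V T) :=
  Ω.filter fun μ => evalF μ F = .t

/-- W3C difference: keep (with multiplicity) the mappings `μ1` of `Ω1` such that
every `μ2 ∈ Ω2` is incompatible with `μ1`, or compatible with
`(μ1 ∪ μ2)(F) = false`. -/
def wdiff (F : SForm V T) (Ω1 Ω2 : Multiset (SMap V T)) : Multiset (SMap V T) :=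
  Ω1.filter fun μ1 => ∀ μ2 ∈ Ω2,
    ¬ Compat μ1 μ2 ∨ (Compat μ1 μ2 ∧ evalF (μ1 ∪ μ2) F = .f)

end

lemma compat_refl {V T : Type} [DecidableEq V] [DecidableEq T] (μ : SMap V T) :
    Compat μ μ := fun _ _ _ => rfl

lemma compat_symm {V T : Type} [DecidableEq V] [DecidableEq T] {μ1 μ2 : SMap V T}
    (h : Compat μ1 μ2) : Compat μ2 μ1 :=
  fun x hx2 hx1 => (h x hx1 hx2).symm

lemma compat_eq_of_keys_eq {V T : Type} [DecidableEq V] [DecidableEq T]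
    {μ1 μ2 : SMap V T} (hk : μ1.keys = μ2.keys) (h : Compat μ1 μ2) : μ1 = μ2 := by
  apply Finmap.ext_lookup
  intro x
  by_cases hx : x ∈ μ1
  · have hx2 : x ∈ μ2 := by
      rw [← Finmap.mem_keys, ← hk, Finmap.mem_keys]; exact hx
    exact h x hx hx2
  · have hx2 : x ∉ μ2 := by
      rw [← Finmap.mem_keys, ← hk, Finmap.mem_keys]; exact hx
    rw [Finmap.lookup_eq_none.mpr hx, Finmap.lookup_eq_none.mpr hx2]

/-- the double-complement axiom for the simple difference,
when `Ω1` is domain-uniform. -/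
theorem stmt_15 {V T : Type} [DecidableEq V] [DecidableEq T]
    (Ω1 Ω2 : Multiset (SMap V T)) (h1 : DomUniform Ω1) :
    msdiff Ω1 (msdiff Ω1 (msdiff Ω1 Ω2)) = msdiff Ω1 Ω2 := by
  classical
  unfold msdiff
  apply Multiset.filter_congr
  intro μ hμ
  constructor
  · -- incompatible with all of B ⇒ incompatible with all of Ω2
    intro h
    by_contra hP
    push_neg at hP
    -- μ ∈ B: incompatible with every element of A
    have hB : μ ∈ Multiset.filter
        (fun μ1 => ∀ μ2 ∈ Multiset.filter (fun μ1 => ∀ μ2 ∈ Ω2, ¬ Compat μ1 μ2) Ω1,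
          ¬ Compat μ1 μ2) Ω1 := by
      rw [Multiset.mem_filter]
      refine ⟨hμ, ?_⟩
      intro ν hν hc
      rw [Multiset.mem_filter] at hν
      have hkeys := h1 μ hμ ν hν.1
      have : μ = ν := compat_eq_of_keys_eq hkeys hc
      subst this
      obtain ⟨μ2, hμ2, hcmp⟩ := hP
      exact hν.2 μ2 hμ2 hcmp
    exact h μ hB (compat_refl μ)
  · intro hP ν hν hc
    rw [Multiset.mem_filter] at hν
    have hμA : μ ∈ Multiset.filter (fun μ1 => ∀ μ2 ∈ Ω2, ¬ Compat μ1 μ2) Ω1 :=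
      Multiset.mem_filter.mpr ⟨hμ, hP⟩
    exact hν.2 μ hμA (compat_symm hc)
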